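/- Let p: E → (1,∞) be measurable with 1 < p_- ≤ p_+ < ∞ and E^- = {x ∈ E : p(x) ≤ 2}. For measurable vector fields r, s: E → R^n and h: E → R^n with ‖|h|‖_{L^{p(·)}(E^-)} and ‖|s−r|‖_{L^{p(·)}(E)} finite, the integral ∫_{E^-} |h(x)| · | |r(x)|^{p(x)−2}r(x) − |s(x)|^{p(x)−2}s(x) | dx is bounded by C·K·‖|h|‖_{L^{p(·)}(E^-)}·‖|s−r|‖_{L^{p(·)}(E)}^{b_*−1}, where C = sup_{x∈E^-} C(p(x)) with C(p) the constant in the inequality ||s|^{p−2}s − |r|^{p−2}r| ≤ C(p)|s−r|^{p−1} for 1 < p ≤ 2, K ≤ 4 is the Hölder constant, and b_* equals p_- if ‖|s−r|‖_{L^{p(·)}(E)} < 1 and p_+ otherwise. -/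

import Mathlib

/-!
The `C(p)`-inequality reduces the integrand to `C ‖h‖ ‖s - r‖^{p-1}`. For `t` above the norm of
`h` and `t₁` above the norm `B` of `s - r`, Young's inequality `ab ≤ a^p + b^{p'}` applied to
`‖h‖ / t` and `‖s - r‖^{p-1} / t₁^{b⁎-1}` bounds the integral by `2 t t₁^{b⁎-1}`: the first modular
is at most `1` by the choice of `t`, and the second is dominated by the modular of `(s - r) / t₁`
because `t₁^{(b⁎-1)p'} ≥ t₁^p`, which holds for `t₁ ≤ 1` when `b⁎ = p₋ ≤ p` (case `B < 1`) and for
`t₁ ≥ 1` when `b⁎ = p₊ ≥ p`. Letting `t` and `t₁` decrease to the norms gives the constant `2 ≤ 4`.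
-/

open MeasureTheory ENNReal

/-- The variable Lebesgue norm `‖f‖_{L^{p(·)}(E)}`. -/
noncomputable def vNorm {d : ℕ} (E : Set (EuclideanSpace ℝ (Fin d)))
    (p f : EuclideanSpace ℝ (Fin d) → ℝ) : ℝ≥0∞ :=
  sInf {t : ℝ≥0∞ | 0 < t ∧ ∫⁻ x in E, ((‖f x‖₊ : ℝ≥0∞) / t) ^ (p x) ≤ 1}

namespace ENNReal

theorem mul_le_rpow_add_rpow_conjExponent (a b : ℝ≥0∞) {q : ℝ} (hq : 1 < q) :
    a * b ≤ a ^ q + b ^ q.conjExponent := by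
  have hpq := Real.HolderConjugate.conjExponent hq
  refine (young_inequality a b hpq).trans (add_le_add ?_ ?_) <;>
    refine ENNReal.div_le_of_le_mul (le_mul_of_one_le_right' (one_le_ofReal.2 ?_))
  exacts [hpq.lt.le, hpq.symm.lt.le]

theorem rpow_sub_one_div_rpow_rpow_conjExponent_le (a : ℝ≥0∞) {t : ℝ≥0∞} {q b : ℝ}
    (hq : 1 < q) (htb : t ≤ 1 ∧ b ≤ q ∨ 1 ≤ t ∧ q ≤ b) :
    (a ^ (q - 1) / t ^ (b - 1)) ^ q.conjExponent ≤ (a / t) ^ q := by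
  have hq' : 0 < q.conjExponent := (Real.HolderConjugate.conjExponent hq).symm.pos
  have hmul : (q - 1) * q.conjExponent = q := by
    rw [Real.conjExponent]; field_simp [(sub_pos.2 hq).ne']
  rw [div_rpow_of_nonneg _ _ hq'.le, div_rpow_of_nonneg _ _ (by linarith), ← rpow_mul, ← rpow_mul,
    hmul]
  refine ENNReal.div_le_div_left ?_ _
  rcases htb with ⟨ht, hb⟩ | ⟨ht, hb⟩
  · refine rpow_le_rpow_of_exponent_ge ht (le_of_le_of_eq ?_ hmul)
    gcongr
  · refine rpow_le_rpow_of_exponent_le ht (le_of_eq_of_le hmul.symm ?_)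
    gcongr

theorem le_mul_mul_of_forall_lt {k a b c : ℝ≥0∞} (hk : k ≠ ⊤) (ha : a ≠ ⊤) (hb : b ≠ ⊤)
    (h : ∀ a' > a, ∀ b' > b, c ≤ k * a' * b') : c ≤ k * a * b := by
  rcases eq_or_ne k 0 with rfl | hk0
  · simpa using h (a + 1) (lt_add_right ha one_ne_zero) (b + 1) (lt_add_right hb one_ne_zero)
  rw [mul_assoc, mul_comm, ← ENNReal.div_le_iff hk0 hk]
  refine le_mul_of_forall_lt (Or.inr hb) (Or.inl ha) fun a' ha' b' hb' => ?_
  rw [ENNReal.div_le_iff hk0 hk, mul_comm, ← mul_assoc]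
  exact h a' ha' b' hb'

end ENNReal

theorem lintegral_mul_le_two_mul_of_lintegral_div_rpow_le_one {α : Type*} [MeasurableSpace α]
    {μ : Measure α} {q : α → ℝ} (hq : Measurable q) (hq1 : ∀ᵐ x ∂μ, 1 < q x)
    {F G : α → ℝ≥0∞} (hF : Measurable F) {t T : ℝ≥0∞} (ht : t ≠ 0) (hT : T ≠ 0)
    (hFt : ∫⁻ x, (F x / t) ^ q x ∂μ ≤ 1) (hGT : ∫⁻ x, (G x / T) ^ (q x).conjExponent ∂μ ≤ 1) :
    ∫⁻ x, F x * G x ∂μ ≤ 2 * t * T := by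
  rcases eq_or_ne t ⊤ with rfl | ht'
  · simp [hT]
  rcases eq_or_ne T ⊤ with rfl | hT'
  · simp [ht]
  calc ∫⁻ x, F x * G x ∂μ = ∫⁻ x, t * T * (F x / t * (G x / T)) ∂μ := by
        refine lintegral_congr fun x => ?_
        rw [mul_mul_mul_comm, ENNReal.mul_div_cancel ht ht', ENNReal.mul_div_cancel hT hT']
    _ ≤ ∫⁻ x, t * T * ((F x / t) ^ q x + (G x / T) ^ (q x).conjExponent) ∂μ := by
        refine lintegral_mono_ae (hq1.mono fun x hx => ?_)
        gcongr
        exact ENNReal.mul_le_rpow_add_rpow_conjExponent _ _ hx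
    _ = t * T * (∫⁻ x, (F x / t) ^ q x ∂μ + ∫⁻ x, (G x / T) ^ (q x).conjExponent ∂μ) := by
        rw [lintegral_const_mul' _ _ (mul_ne_top ht' hT'),
          lintegral_add_left ((hF.div_const t).pow hq)]
    _ ≤ t * T * (1 + 1) := by gcongr
    _ = 2 * t * T := by ring

section VariableLebesgue

variable {d : ℕ} {E : Set (EuclideanSpace ℝ (Fin d))} {p : EuclideanSpace ℝ (Fin d) → ℝ}

theorem lintegral_div_rpow_le_one_of_vNorm_lt {f : EuclideanSpace ℝ (Fin d) → ℝ}
    (hp : ∀ᵐ x ∂volume.restrict E, 0 ≤ p x) {t : ℝ≥0∞} (ht : vNorm E p f < t) :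
    ∫⁻ x in E, (‖f x‖ₑ / t) ^ p x ≤ 1 := by
  obtain ⟨u, ⟨-, hu⟩, hut⟩ := sInf_lt_iff.mp ht
  refine le_trans (lintegral_mono_ae (hp.mono fun x hx => ?_)) hu
  exact rpow_le_rpow (ENNReal.div_le_div_left hut.le _) hx

theorem lintegral_enorm_mul_enorm_rpow_le {S : Set (EuclideanSpace ℝ (Fin d))} (hSE : S ⊆ E)
    (hp : Measurable p) (hp1 : ∀ᵐ x ∂volume.restrict E, 1 < p x)
    {f g : EuclideanSpace ℝ (Fin d) → ℝ} (hf : Measurable f)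
    (hfS : vNorm S p f ≠ ⊤) (hgE : vNorm E p g ≠ ⊤) {b : ℝ} (hb : 1 < b)
    (hpb : vNorm E p g < 1 → ∀ᵐ x ∂volume.restrict E, b ≤ p x)
    (hpb' : 1 ≤ vNorm E p g → ∀ᵐ x ∂volume.restrict E, p x ≤ b) :
    ∫⁻ x in S, ‖f x‖ₑ * ‖g x‖ₑ ^ (p x - 1) ≤ 2 * vNorm S p f * vNorm E p g ^ (b - 1) := by
  set A := vNorm S p f
  set B := vNorm E p g
  have hb' : 0 < b - 1 := by linarith
  have hp0 : ∀ᵐ x ∂volume.restrict E, 0 ≤ p x := hp1.mono fun x hx => by linarith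
  have hp1S := ae_restrict_of_ae_restrict_of_subset hSE hp1
  have hadmissible : ∀ t > A, ∀ t₁ > B, (B < 1 → t₁ ≤ 1) → (1 ≤ B → 1 ≤ t₁) →
      ∫⁻ x in S, ‖f x‖ₑ * ‖g x‖ₑ ^ (p x - 1) ≤ 2 * t * t₁ ^ (b - 1) := by
    intro t hAt t₁ hBt₁ ht₁ ht₁'
    have hpt₁ : ∀ᵐ x ∂volume.restrict E, t₁ ≤ 1 ∧ b ≤ p x ∨ 1 ≤ t₁ ∧ p x ≤ b := by
      rcases lt_or_ge B 1 with hB | hB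
      · exact (hpb hB).mono fun x hx => Or.inl ⟨ht₁ hB, hx⟩
      · exact (hpb' hB).mono fun x hx => Or.inr ⟨ht₁' hB, hx⟩
    refine lintegral_mul_le_two_mul_of_lintegral_div_rpow_le_one hp hp1S hf.enorm
      (ne_bot_of_gt hAt) (rpow_pos_of_nonneg (bot_le.trans_lt hBt₁) hb'.le).ne'
      (lintegral_div_rpow_le_one_of_vNorm_lt (ae_restrict_of_ae_restrict_of_subset hSE hp0) hAt) ?_
    calc ∫⁻ x in S, (‖g x‖ₑ ^ (p x - 1) / t₁ ^ (b - 1)) ^ (p x).conjExponent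
        ≤ ∫⁻ x in S, (‖g x‖ₑ / t₁) ^ p x := by
          refine lintegral_mono_ae ?_
          filter_upwards [hp1S, ae_restrict_of_ae_restrict_of_subset hSE hpt₁] with x hx hxb
          exact rpow_sub_one_div_rpow_rpow_conjExponent_le _ hx hxb
      _ ≤ ∫⁻ x in E, (‖g x‖ₑ / t₁) ^ p x := lintegral_mono_set hSE
      _ ≤ 1 := lintegral_div_rpow_le_one_of_vNorm_lt hp0 hBt₁
  refine le_mul_mul_of_forall_lt ofNat_ne_top hfS (rpow_ne_top_of_nonneg hb'.le hgE)
    fun t ht u hu => ?_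
  -- `t₁ := u ^ (b - 1)⁻¹` is the parameter with `t₁ ^ (b - 1) = u`, capped at `1` when `B < 1`
  have hBu : B < u ^ (b - 1)⁻¹ := by
    simpa [rpow_rpow_inv hb'.ne'] using rpow_lt_rpow hu (inv_pos.2 hb')
  have hu' : (u ^ (b - 1)⁻¹) ^ (b - 1) = u := rpow_inv_rpow hb'.ne' u
  by_cases hB : B < 1
  · calc _ ≤ 2 * t * min 1 (u ^ (b - 1)⁻¹) ^ (b - 1) :=
          hadmissible t ht _ (lt_min hB hBu) (fun _ => min_le_left _ _)
            (fun h => absurd h (not_le.2 hB))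
      _ ≤ 2 * t * u := by
          gcongr
          exact (rpow_le_rpow (min_le_right _ _) hb'.le).trans_eq hu'
  · exact hu' ▸ hadmissible t ht _ hBu (fun h => absurd h hB) (fun h => h.trans hBu.le)

theorem lintegral_enorm_mul_enorm_rpow_le_of_bounds {S : Set (EuclideanSpace ℝ (Fin d))}
    (hSE : S ⊆ E) (hp : Measurable p) {pm pM : ℝ} (hpm : 1 < pm)
    (hbounds : ∀ᵐ x ∂volume.restrict E, pm ≤ p x ∧ p x ≤ pM)
    {f g : EuclideanSpace ℝ (Fin d) → ℝ} (hf : Measurable f)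
    (hfS : vNorm S p f ≠ ⊤) (hgE : vNorm E p g ≠ ⊤) :
    ∫⁻ x in S, ‖f x‖ₑ * ‖g x‖ₑ ^ (p x - 1) ≤
      2 * vNorm S p f * vNorm E p g ^ ((if vNorm E p g < 1 then pm else pM) - 1) := by
  rcases eq_or_ne (volume.restrict E) 0 with hE | hE
  · rw [Measure.restrict_eq_zero.2 (measure_mono_null hSE (Measure.restrict_eq_zero.1 hE))]
    simp
  have hpmM : pm ≤ pM := by
    have := ae_neBot.2 hE
    obtain ⟨x, hx⟩ := hbounds.exists
    exact hx.1.trans hx.2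
  refine lintegral_enorm_mul_enorm_rpow_le hSE hp (hbounds.mono fun x hx => hpm.trans_le hx.1)
    hf hfS hgE (by split_ifs <;> linarith) (fun hB => hbounds.mono fun x hx => ?_)
    (fun hB => hbounds.mono fun x hx => ?_)
  · rw [if_pos hB]; exact hx.1
  · rw [if_neg (not_lt.2 hB)]; exact hx.2

end VariableLebesgue

theorem ofReal_norm_mul_le_mul_enorm_mul_enorm_rpow {V W : Type*} [SeminormedAddCommGroup V]
    [SeminormedAddCommGroup W] (w : W) {v : V} {b C q : ℝ} (hq : 1 ≤ q)
    (hb : b ≤ C * ‖v‖ ^ (q - 1)) :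
    ENNReal.ofReal (‖w‖ * b) ≤ ENNReal.ofReal C * (‖w‖ₑ * ‖v‖ₑ ^ (q - 1)) := by
  calc ENNReal.ofReal (‖w‖ * b) ≤ ENNReal.ofReal (C * (‖w‖ * ‖v‖ ^ (q - 1))) := by
        refine ENNReal.ofReal_le_ofReal ?_
        linarith [mul_le_mul_of_nonneg_left hb (norm_nonneg w)]
    _ = ENNReal.ofReal C * (‖w‖ₑ * ‖v‖ₑ ^ (q - 1)) := by
        rw [ENNReal.ofReal_mul' (by positivity), ENNReal.ofReal_mul (norm_nonneg _),
          ← ofReal_rpow_of_nonneg (norm_nonneg _) (by linarith), ofReal_norm, ofReal_norm]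

theorem stmt19_general {d n : ℕ} (E : Set (EuclideanSpace ℝ (Fin d))) (hE : MeasurableSet E)
    (p : EuclideanSpace ℝ (Fin d) → ℝ) (hp : Measurable p)
    (pm pM : ℝ) (hpm1 : 1 < pm)
    (hbounds : ∀ᵐ x ∂(volume.restrict E), pm ≤ p x ∧ p x ≤ pM)
    (r s h : EuclideanSpace ℝ (Fin d) → EuclideanSpace ℝ (Fin n))
    (hh : Measurable h)
    (hhfin : vNorm (E ∩ {x | p x ≤ 2}) p (fun x => ‖h x‖) < ⊤)
    (hsrfin : vNorm E p (fun x => ‖s x - r x‖) < ⊤)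
    (Cfun : ℝ → ℝ) (C : ℝ)
    (hCfun : ∀ q : ℝ, 1 < q → q ≤ 2 →
      ∀ a b : EuclideanSpace ℝ (Fin n),
        ‖(‖a‖ ^ (q - 2)) • a - (‖b‖ ^ (q - 2)) • b‖ ≤ Cfun q * ‖a - b‖ ^ (q - 1))
    (hC : ∀ x ∈ E ∩ {x | p x ≤ 2}, Cfun (p x) ≤ C) :
    ∫⁻ x in E ∩ {x | p x ≤ 2},
        ENNReal.ofReal (‖h x‖ *
          ‖(‖r x‖ ^ (p x - 2)) • r x - (‖s x‖ ^ (p x - 2)) • s x‖) ≤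
      ENNReal.ofReal C * 4 * vNorm (E ∩ {x | p x ≤ 2}) p (fun x => ‖h x‖) *
        (vNorm E p (fun x => ‖s x - r x‖)) ^
          ((if vNorm E p (fun x => ‖s x - r x‖) < 1 then pm else pM) - 1) := by
  have hpointwise : ∀ᵐ x ∂volume.restrict (E ∩ {x | p x ≤ 2}),
      ENNReal.ofReal (‖h x‖ * ‖(‖r x‖ ^ (p x - 2)) • r x - (‖s x‖ ^ (p x - 2)) • s x‖) ≤
        ENNReal.ofReal C * (‖h x‖ₑ * ‖s x - r x‖ₑ ^ (p x - 1)) := by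
    filter_upwards [ae_restrict_of_ae_restrict_of_subset Set.inter_subset_left hbounds,
      ae_restrict_mem (hE.inter (hp measurableSet_Iic))] with x hxb hx
    have hp1 : 1 < p x := hpm1.trans_le hxb.1
    refine ofReal_norm_mul_le_mul_enorm_mul_enorm_rpow (h x) hp1.le ?_
    rw [norm_sub_rev (s x)]
    exact (hCfun (p x) hp1 hx.2 (r x) (s x)).trans (by gcongr; exact hC x hx)
  have hholder := lintegral_enorm_mul_enorm_rpow_le_of_bounds Set.inter_subset_left hp hpm1
    hbounds hh.norm hhfin.ne hsrfin.ne
  simp only [enorm_norm] at hholder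
  calc _ ≤ ∫⁻ x in E ∩ {x | p x ≤ 2}, ENNReal.ofReal C * (‖h x‖ₑ * ‖s x - r x‖ₑ ^ (p x - 1)) :=
        lintegral_mono_ae hpointwise
    _ = ENNReal.ofReal C *
          ∫⁻ x in E ∩ {x | p x ≤ 2}, ‖h x‖ₑ * ‖s x - r x‖ₑ ^ (p x - 1) :=
        lintegral_const_mul' _ _ ofReal_ne_top
    _ ≤ _ := by
        refine (mul_le_mul_right hholder _).trans ?_
        rw [← mul_assoc, ← mul_assoc]
        gcongr
        norm_num

/-- On `E⁻ = {x ∈ E : p(x) ≤ 2}`, the integral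
`∫_{E⁻} |h| | |r|^{p(x)−2}r − |s|^{p(x)−2}s | dx` is bounded by
`C · K · ‖|h|‖_{L^{p(·)}(E⁻)} ‖|s−r|‖_{L^{p(·)}(E)}^{b⁎−1}`, where
`C = sup_{x∈E⁻} C(p(x))` for the constant `C(p)` in the pointwise inequality
`| |s|^{p−2}s − |r|^{p−2}r | ≤ C(p)|s−r|^{p−1}` (`1 < p ≤ 2`), `K = 4` is the
Hölder constant, and `b⁎ = p₋` if `‖|s−r|‖_{L^{p(·)}(E)} < 1`, `b⁎ = p₊`
otherwise. -/
theorem stmt19 {d n : ℕ} (E : Set (EuclideanSpace ℝ (Fin d))) (hE : MeasurableSet E)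
    (p : EuclideanSpace ℝ (Fin d) → ℝ) (hp : Measurable p)
    (pm pM : ℝ) (hpm1 : 1 < pm)
    (hbounds : ∀ᵐ x ∂(volume.restrict E), pm ≤ p x ∧ p x ≤ pM)
    (r s h : EuclideanSpace ℝ (Fin d) → EuclideanSpace ℝ (Fin n))
    (hr : Measurable r) (hs : Measurable s) (hh : Measurable h)
    (hhfin : vNorm (E ∩ {x | p x ≤ 2}) p (fun x => ‖h x‖) < ⊤)
    (hsrfin : vNorm E p (fun x => ‖s x - r x‖) < ⊤)
    (Cfun : ℝ → ℝ) (C : ℝ)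
    (hCfun : ∀ q : ℝ, 1 < q → q ≤ 2 →
      ∀ a b : EuclideanSpace ℝ (Fin n),
        ‖(‖a‖ ^ (q - 2)) • a - (‖b‖ ^ (q - 2)) • b‖ ≤ Cfun q * ‖a - b‖ ^ (q - 1))
    (hC : ∀ x ∈ E ∩ {x | p x ≤ 2}, Cfun (p x) ≤ C) :
    ∫⁻ x in E ∩ {x | p x ≤ 2},
        ENNReal.ofReal (‖h x‖ *
          ‖(‖r x‖ ^ (p x - 2)) • r x - (‖s x‖ ^ (p x - 2)) • s x‖) ≤
      ENNReal.ofReal C * 4 * vNorm (E ∩ {x | p x ≤ 2}) p (fun x => ‖h x‖) *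
        (vNorm E p (fun x => ‖s x - r x‖)) ^
          ((if vNorm E p (fun x => ‖s x - r x‖) < 1 then pm else pM) - 1) :=
  stmt19_general E hE p hp pm pM hpm1 hbounds r s h hh hhfin hsrfin Cfun C hCfun hC
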